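/- arXiv:2309.08598 — 3 statements merged into one kernel-verified Lean document; each statement's English description precedes it below -/
import Mathlib

section
/- Let μ be a probability measure on ℝ^d with finite second moment, and let X₀ and X₁ be ℝ^d-valued random vectors on a common probability space, each with law μ. If for every t ∈ [0,1] the random vector (1−t)X₀ + tX₁ also has law μ, then X₀ = X₁ almost surely. -/
/-!
Along the segment `Xₜ = (1 - t) X₀ + t X₁` one has the pointwise identity
`‖Xₜ‖² + t(1 - t)‖X₀ - X₁‖² = (1 - t)‖X₀‖² + t‖X₁‖²`. When `X₀`, `X₁` and `Xₜ` share the law `μ`,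
all three second moments equal `∫ ‖x‖² dμ < ∞`, so integrating the identity for some
`t ∈ (0, 1)` gives `E‖X₀ - X₁‖² = 0`.
-/

open MeasureTheory

variable {d : ℕ}

local notation "E" => EuclideanSpace ℝ (Fin d)

theorem norm_smul_add_smul_sq_add_mul_norm_sub_sq {F : Type*} [NormedAddCommGroup F]
    [InnerProductSpace ℝ F] (t : ℝ) (a b : F) :
    ‖(1 - t) • a + t • b‖ ^ 2 + t * (1 - t) * ‖a - b‖ ^ 2 = (1 - t) * ‖a‖ ^ 2 + t * ‖b‖ ^ 2 := by
  simp only [← real_inner_self_eq_norm_sq, inner_add_left, inner_add_right, inner_sub_left,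
    inner_sub_right, real_inner_smul_left, real_inner_smul_right, real_inner_comm a b]
  ring

theorem ae_eq_of_integral_sq_norm_smul_add_smul_eq {F : Type*} [NormedAddCommGroup F]
    [InnerProductSpace ℝ F] {Ω : Type*} [MeasurableSpace Ω] {ℙ : Measure Ω} {X₀ X₁ : Ω → F}
    {t : ℝ} (ht₀ : 0 < t) (ht₁ : t < 1)
    (hi₀ : Integrable (fun ω => ‖X₀ ω‖ ^ 2) ℙ) (hi₁ : Integrable (fun ω => ‖X₁ ω‖ ^ 2) ℙ)
    (hiₜ : Integrable (fun ω => ‖(1 - t) • X₀ ω + t • X₁ ω‖ ^ 2) ℙ)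
    (h : ∫ ω, ‖(1 - t) • X₀ ω + t • X₁ ω‖ ^ 2 ∂ℙ
      = (1 - t) * ∫ ω, ‖X₀ ω‖ ^ 2 ∂ℙ + t * ∫ ω, ‖X₁ ω‖ ^ 2 ∂ℙ) :
    X₀ =ᵐ[ℙ] X₁ := by
  have hid (ω : Ω) : t * (1 - t) * ‖X₀ ω - X₁ ω‖ ^ 2
      = (1 - t) * ‖X₀ ω‖ ^ 2 + t * ‖X₁ ω‖ ^ 2 - ‖(1 - t) • X₀ ω + t • X₁ ω‖ ^ 2 := by
    rw [← norm_smul_add_smul_sq_add_mul_norm_sub_sq]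
    ring
  have hsum : Integrable (fun ω => (1 - t) * ‖X₀ ω‖ ^ 2 + t * ‖X₁ ω‖ ^ 2) ℙ :=
    (hi₀.const_mul _).add (hi₁.const_mul _)
  have hint : Integrable (fun ω => t * (1 - t) * ‖X₀ ω - X₁ ω‖ ^ 2) ℙ := by
    simp_rw [hid]
    exact hsum.sub hiₜ
  have hzero : ∫ ω, t * (1 - t) * ‖X₀ ω - X₁ ω‖ ^ 2 ∂ℙ = 0 := by
    simp_rw [hid]
    rw [integral_sub hsum hiₜ, integral_add (hi₀.const_mul _) (hi₁.const_mul _),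
      integral_const_mul, integral_const_mul, h]
    ring
  have hpos : 0 < t * (1 - t) := mul_pos ht₀ (sub_pos.2 ht₁)
  filter_upwards [(integral_eq_zero_iff_of_nonneg (fun ω => by positivity) hint).mp hzero]
    with ω hω
  simpa [hpos.ne', sub_eq_zero] using hω

theorem eq_of_interpolation_same_law_general
    (μ : Measure E)
    (h2μ : Integrable (fun x => ‖x‖ ^ 2) μ)
    {Ω : Type*} [MeasurableSpace Ω] (ℙ : Measure Ω)
    (X₀ X₁ : Ω → E) (hX₀ : Measurable X₀) (hX₁ : Measurable X₁)
    (hlaw₀ : ℙ.map X₀ = μ) (hlaw₁ : ℙ.map X₁ = μ)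
    (hlaw : ∀ t ∈ Set.Icc (0 : ℝ) 1,
      ℙ.map (fun ω => (1 - t) • X₀ ω + t • X₁ ω) = μ) :
    X₀ =ᵐ[ℙ] X₁ := by
  have moment (X : Ω → E) (hX : Measurable X) (hlawX : ℙ.map X = μ) :
      Integrable (fun ω => ‖X ω‖ ^ 2) ℙ ∧ ∫ ω, ‖X ω‖ ^ 2 ∂ℙ = ∫ x, ‖x‖ ^ 2 ∂μ := by
    subst hlawX
    exact ⟨(integrable_map_measure h2μ.aestronglyMeasurable hX.aemeasurable).mp h2μ,
      (integral_map (f := fun x : E => ‖x‖ ^ 2) hX.aemeasurable (by fun_prop)).symm⟩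
  obtain ⟨hi₀, he₀⟩ := moment X₀ hX₀ hlaw₀
  obtain ⟨hi₁, he₁⟩ := moment X₁ hX₁ hlaw₁
  obtain ⟨hiₜ, heₜ⟩ := moment _ (by fun_prop) (hlaw (1 / 2) (by norm_num))
  refine ae_eq_of_integral_sq_norm_smul_add_smul_eq (t := 1 / 2) (by norm_num) (by norm_num)
    hi₀ hi₁ hiₜ ?_
  rw [he₀, he₁, heₜ]
  ring

/-- If `X₀` and `X₁` both have law `μ` (a probability measure on `ℝ^d` with finite
second moment), and every convex combination `(1-t)X₀ + tX₁`, `t ∈ [0,1]`, also has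
law `μ`, then `X₀ = X₁` almost surely. -/
theorem eq_of_interpolation_same_law
    (μ : Measure E) [IsProbabilityMeasure μ]
    (h2μ : Integrable (fun x => ‖x‖ ^ 2) μ)
    {Ω : Type*} [MeasurableSpace Ω] (ℙ : Measure Ω) [IsProbabilityMeasure ℙ]
    (X₀ X₁ : Ω → E) (hX₀ : Measurable X₀) (hX₁ : Measurable X₁)
    (hlaw₀ : ℙ.map X₀ = μ) (hlaw₁ : ℙ.map X₁ = μ)
    (hlaw : ∀ t ∈ Set.Icc (0 : ℝ) 1,
      ℙ.map (fun ω => (1 - t) • X₀ ω + t • X₁ ω) = μ) :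
    X₀ =ᵐ[ℙ] X₁ :=
  eq_of_interpolation_same_law_general μ h2μ ℙ X₀ X₁ hX₀ hX₁ hlaw₀ hlaw₁ hlaw
end

section
/- Let μ and ν be subgaussian probability measures on ℝ^d, i.e. there exists δ > 0 with ∫ e^{δ|x|²} μ(dx) < ∞ and ∫ e^{δ|y|²} ν(dy) < ∞, and let c : ℝ^d × ℝ^d → ℝ be twice continuously differentiable with bounded Hessian. Then there exists r > 0 such that sup over P ∈ Π(μ,ν) of ∫ e^{r|∇c(x,y)|²} P(dx,dy) is finite. -/
open MeasureTheory

noncomputable section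

variable {d : ℕ}

local notation "E" => EuclideanSpace ℝ (Fin d)

def IsCoupling (P : Measure (E × E)) (μ ν : Measure E) : Prop :=
  IsProbabilityMeasure P ∧ P.map Prod.fst = μ ∧ P.map Prod.snd = ν

/-!
A bound `R` on the Hessian makes `∇c` an `R`-Lipschitz map, so `|∇c(z)| ≤ |∇c(0)| + R|z|` and
`r|∇c(z)|² ≤ 2r|∇c(0)|² + δ|z|²` once `r = δ / (2(R² + 1))`. For the sup norm on the product,
`e^{δ|(x,y)|²} ≤ e^{δ|x|²} + e^{δ|y|²}`, and the right-hand side has the same integral under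
every coupling of `μ` and `ν`.
-/

section Gradient

variable {F G : Type*} [NormedAddCommGroup F] [NormedSpace ℝ F]
  [NormedAddCommGroup G] [NormedSpace ℝ G]

theorem norm_fderiv_fderiv_le_of_norm_iteratedFDeriv_two_le {f : F → G} {R : ℝ}
    (hR : ∀ z, ‖iteratedFDeriv ℝ 2 f z‖ ≤ R) (z : F) :
    ‖fderiv ℝ (fderiv ℝ f) z‖ ≤ R := by
  rw [← norm_iteratedFDeriv_zero (𝕜 := ℝ) (f := fderiv ℝ (fderiv ℝ f)),
    norm_iteratedFDeriv_fderiv, norm_iteratedFDeriv_fderiv]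
  exact hR z

theorem norm_fderiv_le_of_norm_iteratedFDeriv_two_le {f : F → G} {R : ℝ}
    (hf : ContDiff ℝ 2 f) (hR : ∀ z, ‖iteratedFDeriv ℝ 2 f z‖ ≤ R) (z : F) :
    ‖fderiv ℝ f z‖ ≤ ‖fderiv ℝ f 0‖ + R * ‖z‖ := by
  have hdiff : Differentiable ℝ (fderiv ℝ f) :=
    (hf.fderiv_right (by norm_num)).differentiable one_ne_zero
  have hlip : ‖fderiv ℝ f z - fderiv ℝ f 0‖ ≤ R * ‖z - 0‖ :=
    convex_univ.norm_image_sub_le_of_norm_fderiv_le (fun x _ => hdiff x)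
      (fun x _ => norm_fderiv_fderiv_le_of_norm_iteratedFDeriv_two_le hR x)
      (Set.mem_univ 0) (Set.mem_univ z)
  rw [sub_zero] at hlip
  linarith [norm_le_norm_sub_add (fderiv ℝ f z) (fderiv ℝ f 0)]

end Gradient

theorem mul_sq_le_of_le_add_mul {a t A R δ : ℝ} (hδ : 0 ≤ δ) (ha : 0 ≤ a)
    (hle : a ≤ A + R * t) :
    δ / (2 * (R ^ 2 + 1)) * a ^ 2 ≤ 2 * (δ / (2 * (R ^ 2 + 1))) * A ^ 2 + δ * t ^ 2 := by
  set r := δ / (2 * (R ^ 2 + 1))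
  have hr : 0 ≤ r := by positivity
  have hsq : a ^ 2 ≤ 2 * (A ^ 2 + (R * t) ^ 2) :=
    (pow_le_pow_left₀ ha hle 2).trans add_sq_le
  have hrR : 2 * r * R ^ 2 ≤ δ := by
    rw [show 2 * r * R ^ 2 = δ * (R ^ 2 / (R ^ 2 + 1)) by simp only [r]; field_simp]
    exact mul_le_of_le_one_right hδ ((div_le_one (by positivity)).2 (by linarith))
  nlinarith [mul_le_mul_of_nonneg_left hsq hr, sq_nonneg t]

theorem Real.exp_mul_norm_sq_prod_le {F G : Type*} [SeminormedAddCommGroup F]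
    [SeminormedAddCommGroup G] (δ : ℝ) (z : F × G) :
    Real.exp (δ * ‖z‖ ^ 2) ≤ Real.exp (δ * ‖z.1‖ ^ 2) + Real.exp (δ * ‖z.2‖ ^ 2) := by
  rw [Prod.norm_def]
  rcases max_cases ‖z.1‖ ‖z.2‖ with ⟨hmax, -⟩ | ⟨hmax, -⟩ <;> rw [hmax]
  · linarith [Real.exp_pos (δ * ‖z.2‖ ^ 2)]
  · linarith [Real.exp_pos (δ * ‖z.1‖ ^ 2)]

theorem integrable_and_integral_le_of_le_marginals {α β : Type*} [MeasurableSpace α]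
    [MeasurableSpace β] {P : Measure (α × β)} {μ : Measure α} {ν : Measure β}
    (hfst : P.map Prod.fst = μ) (hsnd : P.map Prod.snd = ν) {f : α → ℝ} {g : β → ℝ}
    (hf : Integrable f μ) (hg : Integrable g ν) {h : α × β → ℝ} (hh : AEStronglyMeasurable h P)
    {K : ℝ} (hle : ∀ z, ‖h z‖ ≤ K * (f z.1 + g z.2)) :
    Integrable h P ∧ ∫ z, h z ∂P ≤ K * ((∫ x, f x ∂μ) + ∫ y, g y ∂ν) := by
  subst hfst hsnd
  have hf' : Integrable (fun z => f z.1) P := hf.comp_measurable measurable_fst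
  have hg' : Integrable (fun z => g z.2) P := hg.comp_measurable measurable_snd
  have hdom : Integrable (fun z => K * (f z.1 + g z.2)) P := (hf'.add hg').const_mul K
  have hint : Integrable h P := hdom.mono' hh (ae_of_all _ hle)
  refine ⟨hint, ?_⟩
  calc ∫ z, h z ∂P ≤ ∫ z, K * (f z.1 + g z.2) ∂P :=
        integral_mono hint hdom fun z => (le_abs_self _).trans (hle z)
    _ = K * ((∫ z, f z.1 ∂P) + ∫ z, g z.2 ∂P) := by
        rw [integral_const_mul, integral_add hf' hg']
    _ = K * ((∫ x, f x ∂P.map Prod.fst) + ∫ y, g y ∂P.map Prod.snd) := by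
        rw [integral_map measurable_fst.aemeasurable hf.1,
          integral_map measurable_snd.aemeasurable hg.1]

theorem exp_grad_sq_integrable_uniformly_general
    (μ ν : Measure E)
    (hsub : ∃ δ > (0 : ℝ), Integrable (fun x => Real.exp (δ * ‖x‖ ^ 2)) μ ∧
      Integrable (fun y => Real.exp (δ * ‖y‖ ^ 2)) ν)
    (c : E × E → ℝ) (hc : ContDiff ℝ 2 c)
    (hHess : ∃ R : ℝ, ∀ z : E × E, ‖iteratedFDeriv ℝ 2 c z‖ ≤ R) :
    ∃ r > (0 : ℝ), ∃ C : ℝ, ∀ P : Measure (E × E), IsCoupling P μ ν →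
      Integrable (fun z => Real.exp (r * ‖fderiv ℝ c z‖ ^ 2)) P ∧
      ∫ z, Real.exp (r * ‖fderiv ℝ c z‖ ^ 2) ∂P ≤ C := by
  obtain ⟨δ, hδ, hμ, hν⟩ := hsub
  obtain ⟨R, hR⟩ := hHess
  set A := ‖fderiv ℝ c 0‖
  set r := δ / (2 * (R ^ 2 + 1))
  have hbound : ∀ z, ‖Real.exp (r * ‖fderiv ℝ c z‖ ^ 2)‖ ≤
      Real.exp (2 * r * A ^ 2) * (Real.exp (δ * ‖z.1‖ ^ 2) + Real.exp (δ * ‖z.2‖ ^ 2)) := by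
    intro z
    have hexp := mul_sq_le_of_le_add_mul hδ.le (norm_nonneg _)
      (norm_fderiv_le_of_norm_iteratedFDeriv_two_le hc hR z)
    rw [Real.norm_of_nonneg (Real.exp_pos _).le]
    calc Real.exp (r * ‖fderiv ℝ c z‖ ^ 2)
        ≤ Real.exp (2 * r * A ^ 2) * Real.exp (δ * ‖z‖ ^ 2) := by
          rw [← Real.exp_add]; exact Real.exp_le_exp.2 hexp
      _ ≤ _ := by gcongr; exact Real.exp_mul_norm_sq_prod_le δ z
  have hmeas : Continuous fun z => Real.exp (r * ‖fderiv ℝ c z‖ ^ 2) := by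
    have := hc.continuous_fderiv (by norm_num); fun_prop
  refine ⟨r, by positivity, _, fun P ⟨_, hfst, hsnd⟩ =>
    integrable_and_integral_le_of_le_marginals hfst hsnd hμ hν
      hmeas.aestronglyMeasurable hbound⟩

/-- If `μ` and `ν` are subgaussian probability measures on `ℝ^d` and `c` is `C²`
with bounded Hessian, then there is `r > 0` such that
`sup_{P ∈ Π(μ,ν)} ∫ e^{r |∇c|²} dP < ∞`. -/
theorem exp_grad_sq_integrable_uniformly
    (μ ν : Measure E) [IsProbabilityMeasure μ] [IsProbabilityMeasure ν]
    (hsub : ∃ δ > (0 : ℝ), Integrable (fun x => Real.exp (δ * ‖x‖ ^ 2)) μ ∧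
      Integrable (fun y => Real.exp (δ * ‖y‖ ^ 2)) ν)
    (c : E × E → ℝ) (hc : ContDiff ℝ 2 c)
    (hHess : ∃ R : ℝ, ∀ z : E × E, ‖iteratedFDeriv ℝ 2 c z‖ ≤ R) :
    ∃ r > (0 : ℝ), ∃ C : ℝ, ∀ P : Measure (E × E), IsCoupling P μ ν →
      Integrable (fun z => Real.exp (r * ‖fderiv ℝ c z‖ ^ 2)) P ∧
      ∫ z, Real.exp (r * ‖fderiv ℝ c z‖ ^ 2) ∂P ≤ C :=
  exp_grad_sq_integrable_uniformly_general μ ν hsub c hc hHess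
end
end

section
/- Let μ and ν be probability measures on ℝ^d, let c : ℝ^d × ℝ^d → [0,∞) be measurable, and let ε > 0. Suppose φ ∈ L¹(μ) and ψ ∈ L¹(ν) are such that π(dx,dy) := exp((φ(x)+ψ(y)−c(x,y))/ε) μ(dx)ν(dy) is a probability measure belonging to Π(μ,ν) with ∫ c dπ < ∞. Then for every P ∈ Π(μ,ν) with ∫ c dP < ∞, the Pythagorean identity holds in [0,∞]: ∫ c dP + ε H(P | μ⊗ν) = ∫ c dπ + ε H(π | μ⊗ν) + ε H(P | π). In particular, π is the unique minimizer over Π(μ,ν) of the functional P ↦ ∫ c dP + ε H(P | μ⊗ν). -/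
/-! Since `π` has density `exp ((φ ⊕ ψ - c) / ε)` with respect to `μ ⊗ ν`, for `P ≪ μ ⊗ ν` one has
`log dP/d(μ⊗ν) = log dP/dπ + (φ ⊕ ψ - c) / ε` `P`-a.e. For a coupling `P` the marginal constraints
turn `∫ φ ⊕ ψ dP` into `∫ φ dμ + ∫ ψ dν`, so `∫ c dP + ε H(P | μ⊗ν) = ∫ φ dμ + ∫ ψ dν + ε H(P | π)`
for every coupling, `π` included (where `H(π | π) = 0`). Minimality and uniqueness are then
Gibbs' inequality: `H(P | π) ≥ 0`, with equality only for `P = π`. -/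

open MeasureTheory
open scoped ENNReal

noncomputable section

variable {d : ℕ}

local notation "E" => EuclideanSpace ℝ (Fin d)

open Classical in
/-- Relative entropy `H(P|Q)`, valued in `(-∞, ∞]`. -/
def relEntropy {α : Type*} [MeasurableSpace α] (P Q : Measure α) : EReal :=
  if P ≪ Q ∧ Integrable (fun x => Real.log ((P.rnDeriv Q x).toReal)) P
  then ((∫ x, Real.log ((P.rnDeriv Q x).toReal) ∂P : ℝ) : EReal) else ⊤

/-- The entropic transport cost functional
`J(P) = ∫ c dP + ε H(P | μ⊗ν)`, with the cost integral taken in `[0,∞]`. -/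
def entCost (ε : ℝ) (c : E × E → ℝ) (μ ν : Measure E) (P : Measure (E × E)) : EReal :=
  ((∫⁻ z, ENNReal.ofReal (c z) ∂P : ℝ≥0∞) : EReal)
    + (ε : EReal) * relEntropy P (μ.prod ν)

open InformationTheory

section RelativeEntropy

variable {α : Type*} [MeasurableSpace α] {P Q : Measure α}

lemma relEntropy_of_ac_of_integrable (hPQ : P ≪ Q) (hint : Integrable (llr P Q) P) :
    relEntropy P Q = ((∫ x, llr P Q x ∂P : ℝ) : EReal) :=
  if_pos ⟨hPQ, hint⟩

lemma relEntropy_of_not_ac (hPQ : ¬ P ≪ Q) : relEntropy P Q = ⊤ :=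
  if_neg fun h => hPQ h.1

lemma relEntropy_of_not_integrable (hint : ¬ Integrable (llr P Q) P) : relEntropy P Q = ⊤ :=
  if_neg fun h => hint h.2

/-- `klDiv` carries the mass correction `Q univ - P univ`, which vanishes here. -/
lemma relEntropy_eq_klDiv [IsProbabilityMeasure P] [IsProbabilityMeasure Q] :
    relEntropy P Q = (klDiv P Q : EReal) := by
  by_cases hPQ : P ≪ Q
  · by_cases hint : Integrable (llr P Q) P
    · have hnonneg := integral_llr_add_sub_measure_univ_nonneg hPQ hint
      simp only [probReal_univ, add_sub_cancel_right] at hnonneg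
      rw [relEntropy_of_ac_of_integrable hPQ hint, klDiv_of_ac_of_integrable hPQ hint]
      simp only [probReal_univ, add_sub_cancel_right]
      rw [EReal.coe_ennreal_ofReal, max_eq_left hnonneg]
    · rw [relEntropy_of_not_integrable hint, klDiv_of_not_integrable hint, EReal.coe_ennreal_top]
  · rw [relEntropy_of_not_ac hPQ, klDiv_of_not_ac hPQ, EReal.coe_ennreal_top]

lemma relEntropy_nonneg [IsProbabilityMeasure P] [IsProbabilityMeasure Q] :
    0 ≤ relEntropy P Q := by
  rw [relEntropy_eq_klDiv]
  exact EReal.coe_ennreal_nonneg _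

lemma relEntropy_eq_zero_iff [IsProbabilityMeasure P] [IsProbabilityMeasure Q] :
    relEntropy P Q = 0 ↔ P = Q := by
  rw [relEntropy_eq_klDiv, ← EReal.coe_ennreal_zero, EReal.coe_ennreal_eq_coe_ennreal_iff,
    klDiv_eq_zero_iff]

lemma llr_withDensity_exp_right [SigmaFinite P] [SigmaFinite Q] {ρ : α → ℝ}
    (hρ : AEMeasurable ρ Q) (hPQ : P ≪ Q) :
    llr P (Q.withDensity fun x => ENNReal.ofReal (Real.exp (ρ x))) =ᵐ[P]
      fun x => llr P Q x - ρ x := by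
  have hrn := Measure.rnDeriv_withDensity_right P Q hρ.exp.ennreal_ofReal
    (ae_of_all _ fun x => (ENNReal.ofReal_pos.2 (Real.exp_pos (ρ x))).ne')
    (ae_of_all _ fun _ => ENNReal.ofReal_ne_top)
  filter_upwards [hPQ.ae_le hrn, Measure.rnDeriv_pos hPQ,
    hPQ.ae_le (Measure.rnDeriv_lt_top P Q)] with x hx hpos hlt
  have hrn_ne : (P.rnDeriv Q x).toReal ≠ 0 := (ENNReal.toReal_pos hpos.ne' hlt.ne).ne'
  rw [llr, hx, ENNReal.toReal_mul, ENNReal.toReal_inv, ENNReal.toReal_ofReal (Real.exp_nonneg _),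
    Real.log_mul (inv_ne_zero (Real.exp_pos _).ne') hrn_ne, Real.log_inv, Real.log_exp, llr]
  ring

lemma relEntropy_withDensity_exp_right [SigmaFinite P] [SigmaFinite Q] {ρ : α → ℝ}
    (hρ : AEMeasurable ρ Q) (hρP : Integrable ρ P) :
    relEntropy P Q = relEntropy P (Q.withDensity fun x => ENNReal.ofReal (Real.exp (ρ x)))
      + ((∫ x, ρ x ∂P : ℝ) : EReal) := by
  set π := Q.withDensity fun x => ENNReal.ofReal (Real.exp (ρ x))
  by_cases hPQ : P ≪ Q
  · have hPπ : P ≪ π := hPQ.trans (withDensity_absolutelyContinuous' hρ.exp.ennreal_ofReal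
      (ae_of_all _ fun x => (ENNReal.ofReal_pos.2 (Real.exp_pos (ρ x))).ne'))
    have hllr := llr_withDensity_exp_right hρ hPQ
    have hllr' : llr P Q =ᵐ[P] fun x => llr P π x + ρ x := by
      filter_upwards [hllr] with x hx
      rw [hx, sub_add_cancel]
    by_cases hint : Integrable (llr P Q) P
    · have hintπ : Integrable (llr P π) P := (hint.sub hρP).congr hllr.symm
      rw [relEntropy_of_ac_of_integrable hPQ hint, relEntropy_of_ac_of_integrable hPπ hintπ,
        integral_congr_ae hllr', integral_add hintπ hρP, EReal.coe_add]
    · have hintπ : ¬ Integrable (llr P π) P := fun h => hint ((h.add hρP).congr hllr'.symm)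
      rw [relEntropy_of_not_integrable hint, relEntropy_of_not_integrable hintπ, EReal.top_add_coe]
  · have hPπ : ¬ P ≪ π := fun h => hPQ (h.trans (withDensity_absolutelyContinuous _ _))
    rw [relEntropy_of_not_ac hPQ, relEntropy_of_not_ac hPπ, EReal.top_add_coe]

end RelativeEntropy

theorem MeasureTheory.MeasurePreserving.integral_comp_of_aestronglyMeasurable
    {α γ : Type*} [MeasurableSpace α] [MeasurableSpace γ] {P : Measure γ} {μ : Measure α}
    {g : γ → α} (hg : MeasurePreserving g P μ) {f : α → ℝ} (hf : AEStronglyMeasurable f μ) :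
    ∫ z, f (g z) ∂P = ∫ x, f x ∂μ := by
  rw [← hg.map_eq] at hf ⊢
  exact (integral_map hg.measurable.aemeasurable hf).symm

section GibbsDensity

variable {α β : Type*} [MeasurableSpace α] [MeasurableSpace β] {μ : Measure α} {ν : Measure β}
  {φ : α → ℝ} {ψ : β → ℝ} {c : α × β → ℝ} {ε : ℝ} {P : Measure (α × β)}

def gibbsExponent (φ : α → ℝ) (ψ : β → ℝ) (c : α × β → ℝ) (ε : ℝ) (z : α × β) : ℝ :=
  (φ z.1 + ψ z.2 - c z) / ε

lemma aemeasurable_gibbsExponent [SFinite μ] [SFinite ν] (hφ : AEMeasurable φ μ)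
    (hψ : AEMeasurable ψ ν) (hc : Measurable c) :
    AEMeasurable (gibbsExponent φ ψ c ε) (μ.prod ν) :=
  (((hφ.comp_quasiMeasurePreserving Measure.quasiMeasurePreserving_fst).add
    (hψ.comp_quasiMeasurePreserving Measure.quasiMeasurePreserving_snd)).sub
      hc.aemeasurable).div_const ε

lemma integrable_gibbsExponent (hPμ : MeasurePreserving Prod.fst P μ)
    (hPν : MeasurePreserving Prod.snd P ν) (hφ : Integrable φ μ) (hψ : Integrable ψ ν)
    (hcP : Integrable c P) : Integrable (gibbsExponent φ ψ c ε) P :=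
  (((hPμ.integrable_comp_of_integrable hφ).add
    (hPν.integrable_comp_of_integrable hψ)).sub hcP).div_const ε

lemma integral_add_mul_integral_gibbsExponent (hPμ : MeasurePreserving Prod.fst P μ)
    (hPν : MeasurePreserving Prod.snd P ν) (hφ : Integrable φ μ) (hψ : Integrable ψ ν)
    (hcP : Integrable c P) (hε : ε ≠ 0) :
    ∫ z, c z ∂P + ε * ∫ z, gibbsExponent φ ψ c ε z ∂P = ∫ x, φ x ∂μ + ∫ y, ψ y ∂ν := by
  have hφP : Integrable (fun z : α × β => φ z.1) P := hPμ.integrable_comp_of_integrable hφ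
  have hψP : Integrable (fun z : α × β => ψ z.2) P := hPν.integrable_comp_of_integrable hψ
  simp only [gibbsExponent]
  rw [integral_div, integral_sub (f := fun z => φ z.1 + ψ z.2) (hφP.add hψP) hcP,
    integral_add hφP hψP, hPμ.integral_comp_of_aestronglyMeasurable hφ.1,
    hPν.integral_comp_of_aestronglyMeasurable hψ.1]
  field_simp
  ring

lemma coe_integral_add_mul_relEntropy_prod [SigmaFinite μ] [SigmaFinite ν] [SigmaFinite P]
    (hc : Measurable c) (hε : 0 < ε) (hφ : Integrable φ μ) (hψ : Integrable ψ ν)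
    (hPμ : MeasurePreserving Prod.fst P μ) (hPν : MeasurePreserving Prod.snd P ν)
    (hcP : Integrable c P) :
    ((∫ z, c z ∂P : ℝ) : EReal) + ε * relEntropy P (μ.prod ν) =
      ((∫ x, φ x ∂μ + ∫ y, ψ y ∂ν : ℝ) : EReal) + ε * relEntropy P
        ((μ.prod ν).withDensity fun z => ENNReal.ofReal (Real.exp (gibbsExponent φ ψ c ε z))) := by
  rw [relEntropy_withDensity_exp_right
      (aemeasurable_gibbsExponent hφ.aemeasurable hψ.aemeasurable hc)
      (integrable_gibbsExponent hPμ hPν hφ hψ hcP),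
    EReal.left_distrib_of_nonneg_of_ne_top (EReal.coe_nonneg.2 hε.le) (EReal.coe_ne_top ε),
    ← integral_add_mul_integral_gibbsExponent hPμ hPν hφ hψ hcP hε.ne', EReal.coe_add,
    ← EReal.coe_mul, add_assoc, add_comm (ε * _ : EReal)]

end GibbsDensity

lemma entCost_of_integrable {ε : ℝ} {c : E × E → ℝ} {μ ν : Measure E} {P : Measure (E × E)}
    (hc0 : ∀ z, 0 ≤ c z) (hcP : Integrable c P) :
    entCost ε c μ ν P = ((∫ z, c z ∂P : ℝ) : EReal) + ε * relEntropy P (μ.prod ν) := by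
  rw [entCost, ← ofReal_integral_eq_lintegral_ofReal hcP (ae_of_all _ hc0),
    EReal.coe_ennreal_ofReal, max_eq_left (integral_nonneg hc0)]

lemma entCost_of_not_integrable {ε : ℝ} {c : E × E → ℝ} {μ ν : Measure E} {P : Measure (E × E)}
    [IsProbabilityMeasure μ] [IsProbabilityMeasure ν] [IsProbabilityMeasure P]
    (hc : Measurable c) (hc0 : ∀ z, 0 ≤ c z) (hε : 0 ≤ ε) (hcP : ¬ Integrable c P) :
    entCost ε c μ ν P = ⊤ := by
  have hcost : ∫⁻ z, ENNReal.ofReal (c z) ∂P = ⊤ := by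
    by_contra h
    exact hcP ((lintegral_ofReal_ne_top_iff_integrable hc.aestronglyMeasurable
      (ae_of_all _ hc0)).1 h)
  rw [entCost, hcost, EReal.coe_ennreal_top, EReal.top_add_of_ne_bot]
  exact ne_bot_of_le_ne_bot EReal.zero_ne_bot
    (EReal.mul_nonneg (EReal.coe_nonneg.2 hε) relEntropy_nonneg)

/-- Pythagorean identity for entropic optimal transport: if
`π = exp((φ⊕ψ−c)/ε) μ⊗ν ∈ Π(μ,ν)` with `φ ∈ L¹(μ)`, `ψ ∈ L¹(ν)`, `∫ c dπ < ∞`,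
then for every `P ∈ Π(μ,ν)` with `∫ c dP < ∞`,
`∫ c dP + ε H(P|μ⊗ν) = ∫ c dπ + ε H(π|μ⊗ν) + ε H(P|π)`;
in particular `π` uniquely minimizes `P ↦ ∫ c dP + ε H(P|μ⊗ν)` over `Π(μ,ν)`. -/
theorem entropic_pythagorean_identity
    (μ ν : Measure E) [IsProbabilityMeasure μ] [IsProbabilityMeasure ν]
    (c : E × E → ℝ) (hcm : Measurable c) (hc0 : ∀ z, 0 ≤ c z)
    (ε : ℝ) (hε : 0 < ε)
    (φ ψ : E → ℝ) (hφ : Integrable φ μ) (hψ : Integrable ψ ν)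
    (π : Measure (E × E))
    (hπdef : π = (μ.prod ν).withDensity fun z =>
      ENNReal.ofReal (Real.exp ((φ z.1 + ψ z.2 - c z) / ε)))
    (hπc : IsCoupling π μ ν) (hcπ : Integrable c π) :
    (∀ P : Measure (E × E), IsCoupling P μ ν → Integrable c P →
      ((∫ z, c z ∂P : ℝ) : EReal) + (ε : EReal) * relEntropy P (μ.prod ν)
        = ((∫ z, c z ∂π : ℝ) : EReal) + (ε : EReal) * relEntropy π (μ.prod ν)
            + (ε : EReal) * relEntropy P π) ∧
    (∀ P : Measure (E × E), IsCoupling P μ ν →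
      entCost ε c μ ν π ≤ entCost ε c μ ν P) ∧
    (∀ P : Measure (E × E), IsCoupling P μ ν →
      entCost ε c μ ν P = entCost ε c μ ν π → P = π) := by
  have hπ : IsProbabilityMeasure π := hπc.1
  set D : ℝ := ∫ x, φ x ∂μ + ∫ y, ψ y ∂ν
  have hcost : ∀ P, IsCoupling P μ ν → Integrable c P →
      ((∫ z, c z ∂P : ℝ) : EReal) + ε * relEntropy P (μ.prod ν) = D + ε * relEntropy P π := by
    intro P hP hcP
    have : IsProbabilityMeasure P := hP.1
    rw [hπdef]
    exact coe_integral_add_mul_relEntropy_prod hcm hε hφ hψ ⟨measurable_fst, hP.2.1⟩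
      ⟨measurable_snd, hP.2.2⟩ hcP
  have hcostπ : ((∫ z, c z ∂π : ℝ) : EReal) + ε * relEntropy π (μ.prod ν) = D := by
    rw [hcost π hπc hcπ, relEntropy_eq_zero_iff.2 rfl, mul_zero, add_zero]
  have hentπ : entCost ε c μ ν π = D := (entCost_of_integrable hc0 hcπ).trans hcostπ
  refine ⟨fun P hP hcP => by rw [hcost P hP hcP, hcostπ], fun P hP => ?_, fun P hP hPπ => ?_⟩
  all_goals have : IsProbabilityMeasure P := hP.1
  · by_cases hcP : Integrable c P
    · rw [hentπ, entCost_of_integrable hc0 hcP, hcost P hP hcP]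
      exact le_add_of_nonneg_right (EReal.mul_nonneg (EReal.coe_nonneg.2 hε.le) relEntropy_nonneg)
    · rw [entCost_of_not_integrable hcm hc0 hε.le hcP]
      exact le_top
  · have hcP : Integrable c P := by
      by_contra hcP
      rw [entCost_of_not_integrable hcm hc0 hε.le hcP, hentπ] at hPπ
      exact EReal.coe_ne_top _ hPπ.symm
    rw [entCost_of_integrable hc0 hcP, hcost P hP hcP, hentπ] at hPπ
    have hεH : (ε : EReal) * relEntropy P π = 0 := by
      simpa [EReal.add_sub_cancel_left] using congrArg (· - (D : EReal)) hPπ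
    exact relEntropy_eq_zero_iff.1 ((mul_eq_zero.1 hεH).resolve_left (by exact_mod_cast hε.ne'))

end
end
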